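/- Soundness of the simulation (−)⋆: for all states_i σ₁, σ₂ and every Kct-state σ₁', if σ₁ ⇝^i σ₂ and σ₁⋆ =_σ σ₁', then there exists a Kct-state σ₂' such that σ₁' ⇝ σ₂' and σ₂⋆ =_σ σ₂'. -/
import Mathlib


/-- λct-terms in de Bruijn notation. -/
inductive CT : Type where
  | var : ℕ → CT
  | app : CT → CT → CT
  | lam : CT → CT
  | catch : CT → CT
  | throw : ℕ → CT → CT

/-- λgs-terms in de Bruijn notation. -/
inductive GS : Type where
  | var : ℕ → GS
  | app : GS → GS → GS
  | lam : GS → GS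
  | getc : GS → GS
  | setc : ℕ → GS → GS
/-- The translation relation ↓_n^{I,Iμ}(t) = t' from λgs-terms to λct-terms. -/
inductive Tr : ℕ → List ℕ → List (List ℕ) → GS → CT → Prop where
  | var : ∀ {n I Iμ l k g}, I[l]? = some k → n - k = g → Tr n I Iμ (.var l) (.var g)
  | app : ∀ {n I Iμ t u t' u'}, Tr n I Iμ t t' → Tr n I Iμ u u' →
      Tr n I Iμ (.app t u) (.app t' u')
  | lam : ∀ {n I Iμ t t'}, Tr (n + 1) ((n + 1) :: I) Iμ t t' →
      Tr n I Iμ (.lam t) (.lam t')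
  | getc : ∀ {n I Iμ t t'}, Tr n I (I :: Iμ) t t' →
      Tr n I Iμ (.getc t) (.catch t')
  | setc : ∀ {n I Iμ α I' t t'}, Iμ[α]? = some I' → Tr n I' Iμ t t' →
      Tr n I Iμ (.setc α t) (.throw α t')
/-- A Kct-machine closure [t, E, Eμ]: a λct-term, an environment (list of closures)
    and a list of stacks (a stack is a list of closures). -/
inductive Clo : Type where
  | mk : CT → List Clo → List (List Clo) → Clo

/-- A Kct-machine state ≺t, E, Eμ, S≻. -/
structure KState : Type where
  t : CT
  E : List Clo
  Eμ : List (List Clo)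
  S : List Clo

/-- The transition relation ⇝ of the Kct-machine. -/
inductive StepCT : KState → KState → Prop where
  | var : ∀ {k E Eμ S t E' Eμ'}, E[k]? = some (Clo.mk t E' Eμ') →
      StepCT ⟨.var k, E, Eμ, S⟩ ⟨t, E', Eμ', S⟩
  | app : ∀ {t u E Eμ S},
      StepCT ⟨.app t u, E, Eμ, S⟩ ⟨t, E, Eμ, Clo.mk u E Eμ :: S⟩
  | lam : ∀ {t E Eμ c S},
      StepCT ⟨.lam t, E, Eμ, c :: S⟩ ⟨t, c :: E, Eμ, S⟩
  | catch : ∀ {t E Eμ S},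
      StepCT ⟨.catch t, E, Eμ, S⟩ ⟨t, E, S :: Eμ, S⟩
  | throw : ∀ {α t E Eμ S S'}, Eμ[α]? = some S' →
      StepCT ⟨.throw α t, E, Eμ, S⟩ ⟨t, E, Eμ, S'⟩
/-- A Kgs^it-machine closure_i [t, n, I, Iμ, E, Eμ]: a λgs-term, a natural number, a
    vector, a table, a global environment (list of closures_i) and a list of stacks_i. -/
inductive CloI : Type where
  | mk : GS → ℕ → List ℕ → List (List ℕ) → List CloI → List (List CloI) → CloI

/-- A Kgs^it-machine state_i ≺t, n, I, Iμ, E, Eμ, S≻. -/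
structure IState : Type where
  t : GS
  n : ℕ
  I : List ℕ
  Iμ : List (List ℕ)
  E : List CloI
  Eμ : List (List CloI)
  S : List CloI

/-- The transition relation ⇝^i of the Kgs^it-machine. -/
inductive StepIT : IState → IState → Prop where
  | var : ∀ {l n I Iμ E Eμ S k g t n' I' Iμ' E' Eμ'},
      I[l]? = some k → n - k = g → E[g]? = some (CloI.mk t n' I' Iμ' E' Eμ') →
      StepIT ⟨.var l, n, I, Iμ, E, Eμ, S⟩ ⟨t, n', I', Iμ', E', Eμ', S⟩
  | app : ∀ {t u n I Iμ E Eμ S},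
      StepIT ⟨.app t u, n, I, Iμ, E, Eμ, S⟩
             ⟨t, n, I, Iμ, E, Eμ, CloI.mk u n I Iμ E Eμ :: S⟩
  | lam : ∀ {t n I Iμ E Eμ c S},
      StepIT ⟨.lam t, n, I, Iμ, E, Eμ, c :: S⟩
             ⟨t, n + 1, (n + 1) :: I, Iμ, c :: E, Eμ, S⟩
  | getc : ∀ {t n I Iμ E Eμ S},
      StepIT ⟨.getc t, n, I, Iμ, E, Eμ, S⟩ ⟨t, n, I, I :: Iμ, E, S :: Eμ, S⟩
  | setc : ∀ {α t n I Iμ E Eμ S I' S'}, Iμ[α]? = some I' → Eμ[α]? = some S' →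
      StepIT ⟨.setc α t, n, I, Iμ, E, Eμ, S⟩ ⟨t, n, I', Iμ, E, Eμ, S'⟩
mutual
/-- The relation c⋆ =_c c' between closures_i and Kct-closures. -/
inductive StarC : CloI → Clo → Prop where
  | mk : ∀ {t n I Iμ E Eμ u E' Eμ'}, Tr n I Iμ t u → StarE E E' → StarK Eμ Eμ' →
      StarC (CloI.mk t n I Iμ E Eμ) (Clo.mk u E' Eμ')

/-- Element-wise application of ⋆ to environments/stacks. -/
inductive StarE : List CloI → List Clo → Prop where
  | nil : StarE [] []
  | cons : ∀ {c c' E E'}, StarC c c' → StarE E E' → StarE (c :: E) (c' :: E')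

/-- Element-wise application of ⋆ to lists of stacks. -/
inductive StarK : List (List CloI) → List (List Clo) → Prop where
  | nil : StarK [] []
  | cons : ∀ {S S' Eμ Eμ'}, StarE S S' → StarK Eμ Eμ' → StarK (S :: Eμ) (S' :: Eμ')
end

/-- The relation σ⋆ =_σ σ' between states_i and Kct-states. -/
inductive StarS : IState → KState → Prop where
  | mk : ∀ {t n I Iμ E Eμ S u E' Eμ' S'},
      StarC (CloI.mk t n I Iμ E Eμ) (Clo.mk u E' Eμ') → StarE S S' →
      StarS ⟨t, n, I, Iμ, E, Eμ, S⟩ ⟨u, E', Eμ', S'⟩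

lemma starE_get {E E'} (h : StarE E E') : ∀ {g : ℕ} {c : CloI}, E[g]? = some c →
    ∃ c' : Clo, E'[g]? = some c' ∧ StarC c c' := by
  induction E generalizing E' with
  | nil => cases h; intro g c h; simp at h
  | cons a E ih =>
    cases h with
    | cons hc hE =>
      intro g c h
      cases g with
      | zero =>
        simp only [List.getElem?_cons_zero] at h ⊢
        exact ⟨_, rfl, (Option.some.inj h) ▸ hc⟩
      | succ g =>
        simp only [List.getElem?_cons_succ] at h ⊢
        exact ih hE h

lemma starK_get {Eμ Eμ'} (h : StarK Eμ Eμ') : ∀ {α : ℕ} {S : List CloI}, Eμ[α]? = some S →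
    ∃ S' : List Clo, Eμ'[α]? = some S' ∧ StarE S S' := by
  induction Eμ generalizing Eμ' with
  | nil => cases h; intro α S h; simp at h
  | cons a Eμ ih =>
    cases h with
    | cons hS hK =>
      intro α S h
      cases α with
      | zero =>
        simp only [List.getElem?_cons_zero] at h ⊢
        exact ⟨_, rfl, (Option.some.inj h) ▸ hS⟩
      | succ α =>
        simp only [List.getElem?_cons_succ] at h ⊢
        exact ih hK h

theorem statement_7 (σ₁ σ₂ : IState) (σ₁' : KState)
    (hstep : StepIT σ₁ σ₂) (hsim : StarS σ₁ σ₁') :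
    ∃ σ₂' : KState, StepCT σ₁' σ₂' ∧ StarS σ₂ σ₂' := by
  cases hstep with
  | var hI hg hE =>
    cases hsim with
    | mk hc hS =>
      cases hc with
      | mk htr hE' hK =>
        cases htr with
        | var hI' hg' =>
          rw [hI] at hI'; cases hI'
          subst hg; subst hg'
          obtain ⟨c', hc', hcc⟩ := starE_get hE' hE
          cases hcc with
          | mk htr2 hE2 hK2 =>
            exact ⟨_, .var hc', .mk (.mk htr2 hE2 hK2) hS⟩
  | app =>
    cases hsim with
    | mk hc hS =>
      cases hc with
      | mk htr hE' hK =>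
        cases htr with
        | app h1 h2 =>
          exact ⟨_, .app, .mk (.mk h1 hE' hK) (.cons (.mk h2 hE' hK) hS)⟩
  | lam =>
    cases hsim with
    | mk hc hS =>
      cases hc with
      | mk htr hE' hK =>
        cases htr with
        | lam h1 =>
          cases hS with
          | cons hc2 hS2 =>
            exact ⟨_, .lam, .mk (.mk h1 (.cons hc2 hE') hK) hS2⟩
  | getc =>
    cases hsim with
    | mk hc hS =>
      cases hc with
      | mk htr hE' hK =>
        cases htr with
        | getc h1 =>
          exact ⟨_, .catch, .mk (.mk h1 hE' (.cons hS hK)) hS⟩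
  | setc hIμ hEμ =>
    cases hsim with
    | mk hc hS =>
      cases hc with
      | mk htr hE' hK =>
        cases htr with
        | setc hIμ' h1 =>
          rw [hIμ] at hIμ'; cases hIμ'
          obtain ⟨S'', hS'', hSS⟩ := starK_get hK hEμ
          exact ⟨_, .throw hS'', .mk (.mk h1 hE' hK) hSS⟩
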